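/- arXiv:1107.3267 — 2 statements merged into one kernel-verified Lean document; each statement's English description precedes it below -/
import Mathlib

section
/- Let n ≥ 1, σ ∈ (0,∞) and p ∈ (n/(n+σ),1], and let Φ : (0,∞) → (0,∞) be nondecreasing and of strictly lower type p. Then there exists C, depending only on n, σ and p, such that for all M ∈ (0,∞), r ∈ (0,∞) and x₀ ∈ ℝⁿ: ∫_{{x ∈ ℝⁿ : ‖x−x₀‖_∞ ≥ 4r}} Φ( M r^{n+σ} ‖x−x₀‖_∞^{-(n+σ)} ) dx ≤ C rⁿ Φ(M). -/
open MeasureTheory ENNReal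

/-- for `Φ` nondecreasing and of strictly lower type `p ∈ (n/(n+σ),1]`,
`∫_{‖x−x₀‖_∞ ≥ 4r} Φ(M r^{n+σ} ‖x−x₀‖_∞^{−(n+σ)}) dx ≤ C rⁿ Φ(M)`, with `C` depending
only on `n`, `σ` and `p`; the sup-norm is the norm of `ℝⁿ = Fin n → ℝ`. -/
theorem stmt16 (n : ℕ) (hn : 1 ≤ n) (σ : ℝ) (hσ : 0 < σ)
    (p : ℝ) (hp : p ∈ Set.Ioc ((n : ℝ) / (n + σ)) 1) :
    ∃ C : ℝ, 0 < C ∧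
    ∀ Φ : ℝ → ℝ, MonotoneOn Φ (Set.Ioi 0) → (∀ t ∈ Set.Ioi (0:ℝ), 0 < Φ t) →
      (∀ s ∈ Set.Ioi (0:ℝ), ∀ t ∈ Set.Ioo (0:ℝ) 1, Φ (s * t) ≤ t ^ p * Φ s) →
    ∀ M r : ℝ, 0 < M → 0 < r → ∀ x₀ : Fin n → ℝ,
      (∫⁻ x in {x : Fin n → ℝ | 4 * r ≤ dist x x₀},
          ENNReal.ofReal (Φ (M * r ^ ((n : ℝ) + σ) * dist x x₀ ^ (-((n : ℝ) + σ))))) ≤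
        ENNReal.ofReal (C * r ^ n * Φ M) := by
  obtain ⟨hp1, hp2⟩ := hp
  have hnσ : (0:ℝ) < (n:ℝ) + σ := by positivity
  have hp0 : 0 < p := lt_of_le_of_lt (by positivity) hp1
  set α : ℝ := ((n:ℝ) + σ) * p with hα
  have hnα : (n:ℝ) < α := by
    rw [hα]
    calc (n:ℝ) = ((n:ℝ)/((n:ℝ)+σ)) * ((n:ℝ)+σ) := by field_simp
    _ < p * ((n:ℝ)+σ) := mul_lt_mul_of_pos_right hp1 hnσ
    _ = ((n:ℝ)+σ) * p := by ring
  set c : ℝ := (2:ℝ) ^ ((n:ℝ) - α) with hc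
  have hc0 : 0 < c := Real.rpow_pos_of_pos (by norm_num) _
  have hc1 : c < 1 :=
    Real.rpow_lt_one_of_one_lt_of_neg (by norm_num) (by linarith)
  set C : ℝ := (16:ℝ) ^ n * (4:ℝ) ^ (-α) * (1 - c)⁻¹ with hC
  have hC0 : 0 < C := by
    apply mul_pos (mul_pos (by positivity) (Real.rpow_pos_of_pos (by norm_num) _))
    rw [inv_pos]; linarith
  refine ⟨C, hC0, ?_⟩
  intro Φ hmono hpos hlow M r hM hr x₀
  have hΦM : 0 < Φ M := hpos M hM
  set A : ℕ → Set (Fin n → ℝ) := fun k =>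
    {x | (2:ℝ)^k * (4*r) ≤ dist x x₀ ∧ dist x x₀ < (2:ℝ)^(k+1) * (4*r)} with hA
  have hcover : {x : Fin n → ℝ | 4 * r ≤ dist x x₀} ⊆ ⋃ k, A k := by
    intro x hx
    have hx : 4 * r ≤ dist x x₀ := hx
    have h4r : (0:ℝ) < 4 * r := by linarith
    have h1 : (1:ℝ) ≤ dist x x₀ / (4*r) := (one_le_div h4r).2 hx
    obtain ⟨k, hk1, hk2⟩ := exists_nat_pow_near h1 (one_lt_two (α := ℝ))
    refine Set.mem_iUnion.2 ⟨k, ?_, ?_⟩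
    · calc (2:ℝ)^k * (4*r) ≤ (dist x x₀ / (4*r)) * (4*r) :=
        mul_le_mul_of_nonneg_right hk1 h4r.le
      _ = dist x x₀ := by field_simp
    · calc dist x x₀ = (dist x x₀ / (4*r)) * (4*r) := by field_simp
      _ < (2:ℝ)^(k+1) * (4*r) := mul_lt_mul_of_pos_right hk2 h4r
  have hterm : ∀ k : ℕ,
      (∫⁻ x in A k, ENNReal.ofReal (Φ (M * r ^ ((n : ℝ) + σ) * dist x x₀ ^ (-((n : ℝ) + σ)))))
      ≤ ENNReal.ofReal (((16:ℝ)^n * (4:ℝ)^(-α) * (r^n * Φ M)) * c^k) := by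
    intro k
    set q : ℝ := (2:ℝ)^(k+2) with hq
    have hq1 : (1:ℝ) < q := one_lt_pow₀ (by norm_num) (by omega)
    have hq0 : (0:ℝ) < q := by linarith
    have hbd : ∀ x ∈ A k,
        ENNReal.ofReal (Φ (M * r ^ ((n : ℝ) + σ) * dist x x₀ ^ (-((n : ℝ) + σ))))
        ≤ ENNReal.ofReal (q ^ (-α) * Φ M) := by
      intro x hx
      obtain ⟨hx1, _⟩ := hx
      have hqd : q * r ≤ dist x x₀ := by
        calc q * r = (2:ℝ)^k * (4*r) := by rw [hq]; ring
        _ ≤ dist x x₀ := hx1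
      have hD : (0:ℝ) < dist x x₀ := lt_of_lt_of_le (by positivity) hqd
      set t : ℝ := r ^ ((n:ℝ)+σ) * dist x x₀ ^ (-((n:ℝ)+σ)) with htdef
      have htval : t = (r / dist x x₀) ^ ((n:ℝ)+σ) := by
        rw [htdef, Real.div_rpow hr.le hD.le, Real.rpow_neg hD.le, div_eq_mul_inv]
      have hrd : r / dist x x₀ ≤ q⁻¹ := by
        rw [div_le_iff₀ hD]
        calc r = q⁻¹ * (q * r) := by field_simp
        _ ≤ q⁻¹ * dist x x₀ := mul_le_mul_of_nonneg_left hqd (by positivity)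
      have hqi1 : q⁻¹ < 1 := inv_lt_one_of_one_lt₀ hq1
      have ht0 : 0 < t := by
        rw [htval]; exact Real.rpow_pos_of_pos (by positivity) _
      have htb : t ≤ (q⁻¹) ^ ((n:ℝ)+σ) := by
        rw [htval]; exact Real.rpow_le_rpow (by positivity) hrd hnσ.le
      have ht1 : t < 1 :=
        lt_of_le_of_lt htb (Real.rpow_lt_one (by positivity) hqi1 hnσ)
      have hkey : Φ (M * t) ≤ t ^ p * Φ M := hlow M hM t ⟨ht0, ht1⟩
      have hpow : ((q⁻¹) ^ ((n:ℝ)+σ)) ^ p = q ^ (-α) := by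
        rw [Real.inv_rpow hq0.le, ← Real.rpow_neg hq0.le, ← Real.rpow_mul hq0.le]
        congr 1; rw [hα]; ring
      have htp : t ^ p ≤ q ^ (-α) := by
        rw [← hpow]; exact Real.rpow_le_rpow ht0.le htb hp0.le
      apply ENNReal.ofReal_le_ofReal
      calc Φ (M * r ^ ((n:ℝ)+σ) * dist x x₀ ^ (-((n:ℝ)+σ))) = Φ (M * t) := by
            rw [htdef, mul_assoc]
      _ ≤ t ^ p * Φ M := hkey
      _ ≤ q ^ (-α) * Φ M := mul_le_mul_of_nonneg_right htp hΦM.le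
    have hAm : MeasurableSet (A k) := by
      have : A k = (fun x => dist x x₀) ⁻¹' Set.Ico ((2:ℝ)^k * (4*r)) ((2:ℝ)^(k+1) * (4*r)) := by
        ext x; simp [hA, Set.mem_Ico]
      rw [this]
      exact (measurable_dist.comp (measurable_id.prodMk measurable_const)) measurableSet_Ico
    calc (∫⁻ x in A k, ENNReal.ofReal (Φ (M * r ^ ((n : ℝ) + σ) * dist x x₀ ^ (-((n : ℝ) + σ)))))
        ≤ ∫⁻ _ in A k, ENNReal.ofReal (q ^ (-α) * Φ M) := setLIntegral_mono' hAm hbd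
    _ = ENNReal.ofReal (q ^ (-α) * Φ M) * volume (A k) := setLIntegral_const _ _
    _ ≤ ENNReal.ofReal (q ^ (-α) * Φ M) * ENNReal.ofReal ((2*((2:ℝ)^(k+1) * (4*r)))^n) := by
        gcongr
        have hsub : A k ⊆ Metric.closedBall x₀ ((2:ℝ)^(k+1) * (4*r)) := by
          intro x hx
          exact Metric.mem_closedBall.2 hx.2.le
        calc volume (A k) ≤ volume (Metric.closedBall x₀ ((2:ℝ)^(k+1) * (4*r))) :=
              measure_mono hsub
        _ = ENNReal.ofReal ((2*((2:ℝ)^(k+1) * (4*r)))^n) := by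
              rw [Real.volume_pi_closedBall x₀ (by positivity), Fintype.card_fin]
    _ = ENNReal.ofReal (((16:ℝ)^n * (4:ℝ)^(-α) * (r^n * Φ M)) * c^k) := by
        rw [← ENNReal.ofReal_mul (by positivity)]
        congr 1
        have h2 : (2*((2:ℝ)^(k+1) * (4*r)))^n = (2:ℝ)^(k*n) * 16^n * r^n := by
          have : 2*((2:ℝ)^(k+1) * (4*r)) = ((2:ℝ)^k * 16) * r := by ring
          rw [this, mul_pow, mul_pow, ← pow_mul]
        have h4 : (4:ℝ) = (2:ℝ) ^ (2:ℝ) := by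
          rw [show (2:ℝ) = ((2:ℕ):ℝ) by norm_num, Real.rpow_natCast]; norm_num
        have hx : q ^ (-α) * (2:ℝ)^(k*n) = (4:ℝ)^(-α) * c^k := by
          rw [hq, hc, h4, ← Real.rpow_natCast 2 (k+2), ← Real.rpow_natCast 2 (k*n),
            ← Real.rpow_mul (by norm_num : (0:ℝ) ≤ 2),
            ← Real.rpow_mul (by norm_num : (0:ℝ) ≤ 2),
            ← Real.rpow_natCast ((2:ℝ) ^ ((n:ℝ) - α)) k,
            ← Real.rpow_mul (by norm_num : (0:ℝ) ≤ 2),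
            ← Real.rpow_add (by norm_num : (0:ℝ) < 2),
            ← Real.rpow_add (by norm_num : (0:ℝ) < 2)]
          congr 1; push_cast; ring
        rw [h2]
        linear_combination (16^n * r^n * Φ M) * hx
  calc (∫⁻ x in {x : Fin n → ℝ | 4 * r ≤ dist x x₀},
          ENNReal.ofReal (Φ (M * r ^ ((n : ℝ) + σ) * dist x x₀ ^ (-((n : ℝ) + σ)))))
      ≤ ∫⁻ x in ⋃ k, A k, ENNReal.ofReal (Φ (M * r ^ ((n : ℝ) + σ) * dist x x₀ ^ (-((n : ℝ) + σ)))) :=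
        lintegral_mono_set hcover
  _ ≤ ∑' k, ∫⁻ x in A k, ENNReal.ofReal (Φ (M * r ^ ((n : ℝ) + σ) * dist x x₀ ^ (-((n : ℝ) + σ)))) :=
        lintegral_iUnion_le _ _
  _ ≤ ∑' k, ENNReal.ofReal (((16:ℝ)^n * (4:ℝ)^(-α) * (r^n * Φ M)) * c^k) :=
        ENNReal.tsum_le_tsum hterm
  _ = ENNReal.ofReal (∑' k, ((16:ℝ)^n * (4:ℝ)^(-α) * (r^n * Φ M)) * c^k) := by
        rw [ENNReal.ofReal_tsum_of_nonneg]
        · intro k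
          have : (0:ℝ) < (4:ℝ)^(-α) := Real.rpow_pos_of_pos (by norm_num) _
          positivity
        · exact (summable_geometric_of_lt_one hc0.le hc1).mul_left _
  _ = ENNReal.ofReal (C * r ^ n * Φ M) := by
        congr 1
        rw [tsum_mul_left, tsum_geometric_of_lt_one hc0.le hc1, hC]
        ring
end

section
/- Let n ≥ 1 and C₀, α ∈ (0,∞). Let Ω ⊂ ℝⁿ be a measurable set, x₀ ∈ ℝⁿ, r₀ ∈ (0,∞) and Q₀ := Q(x₀,r₀). Let D : (0,∞)×Ω×Ω → ℂ satisfy |D_t(x,y)| ≤ C₀ t^{-n} exp(−α‖x−y‖_∞²/t²) for all t ∈ (0,∞) and x,y ∈ Ω, and let a : Ω×(0,∞) → ℂ be measurable, supported in (Q₀∩Ω)×(0,r₀), with ‖a‖ := ( ∫₀^{r₀} ∫_{Q₀∩Ω} |a(y,t)|² dy dt/t )^{1/2} < ∞. Then there exists C, depending only on n, C₀ and α, such that for every x ∈ Ω with ‖x−x₀‖_∞ ≥ 2r₀: ∫₀^{r₀} ∫_{Q₀∩Ω} |D_t(x,y)| |a(y,t)| dy dt/t ≤ C ‖x−x₀‖_∞^{-(n+1)}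 r₀ |Q₀∩Ω|^{1/2} ‖a‖. -/
/-!
For `y ∈ Q₀` and `‖x - x₀‖ ≥ 2 r₀` we have `‖x - y‖ ≥ ‖x - x₀‖ / 2`, and
`e^{-u} ≤ (n+1)! u^{-(n+1)}` turns the Gaussian bound into
`|D_t(x,y)| ≤ C ‖x - x₀‖^{-(n+1)} r₀⁻¹ t²` for `t < r₀`. What is left is
`∫∫ t |a| dy dt`, and Cauchy–Schwarz applied to `(|a| / √t) · t^{3/2}` bounds it by
`‖a‖ (∫₀^{r₀} ∫_{Q₀ ∩ Ω} t³ dy dt)^{1/2} ≤ ‖a‖ r₀² |Q₀ ∩ Ω|^{1/2}`.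
-/

open MeasureTheory ENNReal Set Metric Function
open scoped Nat

theorem Real.exp_neg_le_factorial_mul_inv_pow (m : ℕ) {u : ℝ} (hu : 0 < u) :
    Real.exp (-u) ≤ m ! * u⁻¹ ^ m := by
  rw [Real.exp_neg, inv_pow, ← div_eq_mul_inv, inv_le_comm₀ (Real.exp_pos u) (by positivity),
    inv_div]
  exact Real.pow_div_factorial_le_exp u hu.le m

theorem gaussian_kernel_bound_le {n : ℕ} {C₀ α t r d ρ : ℝ} (hC₀ : 0 ≤ C₀) (hα : 0 < α)
    (ht : 0 < t) (htr : t ≤ r) (hrd : 2 * r ≤ d) (hρ : d / 2 ≤ ρ) :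
    C₀ * t ^ (-(n : ℝ)) * Real.exp (-(α * ρ ^ 2 / t ^ 2)) ≤
      C₀ * (n + 1)! * (2 / α) ^ (n + 1) * d ^ (-((n : ℝ) + 1)) * r⁻¹ * t ^ 2 := by
  have hr : 0 < r := ht.trans_le htr
  have hd : 0 < d / 2 := by linarith
  have hρ0 : 0 < ρ := hd.trans_le hρ
  have htn : t ^ n ≤ (d / 2) ^ (n + 1) / r := by
    rw [le_div_iff₀ hr, pow_succ]
    gcongr <;> linarith
  have hρn : ((d / 2) ^ 2) ^ (n + 1) ≤ (ρ ^ 2) ^ (n + 1) := by gcongr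
  rw [Real.rpow_neg ht.le, Real.rpow_natCast, Real.rpow_neg (by linarith),
    show (n : ℝ) + 1 = (n + 1 : ℕ) by push_cast; ring, Real.rpow_natCast]
  calc C₀ * (t ^ n)⁻¹ * Real.exp (-(α * ρ ^ 2 / t ^ 2))
      ≤ C₀ * (t ^ n)⁻¹ * ((n + 1)! * (α * ρ ^ 2 / t ^ 2)⁻¹ ^ (n + 1)) := by
        gcongr
        exact Real.exp_neg_le_factorial_mul_inv_pow _ (by positivity)
    _ = C₀ * (n + 1)! * t ^ 2 * (t ^ n / (α ^ (n + 1) * (ρ ^ 2) ^ (n + 1))) := by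
        rw [inv_div, div_pow, mul_pow]
        field_simp
        ring
    _ ≤ C₀ * (n + 1)! * t ^ 2 *
          ((d / 2) ^ (n + 1) / r / (α ^ (n + 1) * ((d / 2) ^ 2) ^ (n + 1))) := by
        gcongr
    _ = C₀ * (n + 1)! * (2 / α) ^ (n + 1) * (d ^ (n + 1))⁻¹ * r⁻¹ * t ^ 2 := by
        rw [← pow_mul, mul_comm 2, pow_mul, div_pow 2 α, div_pow d 2]
        field_simp

theorem lintegral_mul_le_sq_div_mul_cube {X : Type*} [MeasurableSpace X] (μ : Measure X)
    {w f : X → ℝ≥0∞} (hw : AEMeasurable w μ) (hf : AEMeasurable f μ) (hw_top : ∀ x, w x ≠ ⊤) :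
    ∫⁻ x, w x * f x ∂μ ≤
      (∫⁻ x, f x ^ 2 / w x ∂μ) ^ (1 / 2 : ℝ) * (∫⁻ x, w x ^ 3 ∂μ) ^ (1 / 2 : ℝ) := by
  have hsq : ∀ z : ℝ≥0∞, (z ^ (1 / 2 : ℝ)) ^ (2 : ℝ) = z := fun z => by
    rw [← ENNReal.rpow_mul]; norm_num
  have hpt : ∀ x, w x * f x ≤ (f x ^ 2 / w x) ^ (1 / 2 : ℝ) * (w x ^ 3) ^ (1 / 2 : ℝ) := by
    intro x
    rcases eq_or_ne (w x) 0 with h0 | h0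
    · simp [h0]
    rw [← ENNReal.mul_rpow_of_nonneg _ _ (by norm_num),
      show f x ^ 2 / w x * w x ^ 3 = (w x * f x) ^ 2 by
        rw [pow_succ' (w x) 2, ← mul_assoc, ENNReal.div_mul_cancel h0 (hw_top x)]; ring,
      ← ENNReal.rpow_natCast, ← ENNReal.rpow_mul]
    norm_num
  calc ∫⁻ x, w x * f x ∂μ
      ≤ ∫⁻ x, (f x ^ 2 / w x) ^ (1 / 2 : ℝ) * (w x ^ 3) ^ (1 / 2 : ℝ) ∂μ := lintegral_mono hpt
    _ ≤ _ := by
        simpa only [Pi.div_apply, Pi.mul_apply, hsq] using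
          ENNReal.lintegral_mul_le_Lp_mul_Lq μ Real.HolderConjugate.two_two
            (((hf.pow_const 2).div hw).pow_const (1 / 2 : ℝ))
            ((hw.pow_const 3).pow_const (1 / 2 : ℝ))

theorem setLIntegral_Ioo_lintegral_ofReal_mul_le {X : Type*} [MeasurableSpace X] (ν : Measure X)
    [SFinite ν] {g : X → ℝ → ℝ≥0∞} (hg : Measurable (uncurry g)) (r : ℝ) :
    ∫⁻ t in Ioo 0 r, ∫⁻ y, ENNReal.ofReal t * g y t ∂ν ≤
      ENNReal.ofReal r ^ 2 * ν univ ^ (1 / 2 : ℝ) *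
        (∫⁻ t in Ioo 0 r, ∫⁻ y, g y t ^ 2 / ENNReal.ofReal t ∂ν) ^ (1 / 2 : ℝ) := by
  set μ := (volume.restrict (Ioo (0 : ℝ) r)).prod ν
  have hw : Measurable fun p : ℝ × X => ENNReal.ofReal p.1 :=
    ENNReal.measurable_ofReal.comp measurable_fst
  have hf : Measurable fun p : ℝ × X => g p.2 p.1 := hg.comp measurable_swap
  have hcube : ∫⁻ p, ENNReal.ofReal p.1 ^ 3 ∂μ ≤ ENNReal.ofReal r ^ 4 * ν univ := by
    rw [lintegral_prod _ (hw.pow_const 3).aemeasurable]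
    calc ∫⁻ t in Ioo 0 r, ∫⁻ _, ENNReal.ofReal t ^ 3 ∂ν
        ≤ ∫⁻ _ in Ioo 0 r, ENNReal.ofReal r ^ 3 * ν univ := by
          refine setLIntegral_mono' measurableSet_Ioo fun t ht => ?_
          rw [lintegral_const]
          gcongr
          exact ht.2.le
      _ = ENNReal.ofReal r ^ 4 * ν univ := by
          rw [setLIntegral_const, Real.volume_Ioo, sub_zero]
          ring
  calc ∫⁻ t in Ioo 0 r, ∫⁻ y, ENNReal.ofReal t * g y t ∂ν
      = ∫⁻ p, ENNReal.ofReal p.1 * g p.2 p.1 ∂μ :=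
        (lintegral_prod _ (hw.mul hf).aemeasurable).symm
    _ ≤ (∫⁻ p, g p.2 p.1 ^ 2 / ENNReal.ofReal p.1 ∂μ) ^ (1 / 2 : ℝ) *
          (∫⁻ p, ENNReal.ofReal p.1 ^ 3 ∂μ) ^ (1 / 2 : ℝ) :=
        lintegral_mul_le_sq_div_mul_cube μ hw.aemeasurable hf.aemeasurable fun _ => ofReal_ne_top
    _ ≤ (∫⁻ t in Ioo 0 r, ∫⁻ y, g y t ^ 2 / ENNReal.ofReal t ∂ν) ^ (1 / 2 : ℝ) *
          (ENNReal.ofReal r ^ 4 * ν univ) ^ (1 / 2 : ℝ) := by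
        rw [lintegral_prod (fun p : ℝ × X => g p.2 p.1 ^ 2 / ENNReal.ofReal p.1)
          ((hf.pow_const 2).div hw).aemeasurable]
        gcongr
    _ = _ := by
        rw [ENNReal.mul_rpow_of_nonneg _ _ (by norm_num), ← ENNReal.rpow_natCast _ 4,
          ← ENNReal.rpow_mul, ← ENNReal.rpow_natCast _ 2]
        norm_num
        ring

theorem stmt17_general (n : ℕ) (C₀ α : ℝ) (hC₀ : 0 < C₀) (hα : 0 < α) :
    ∃ C : ℝ, 0 < C ∧
    ∀ (Ω : Set (Fin n → ℝ)), MeasurableSet Ω →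
    ∀ (x₀ : Fin n → ℝ) (r₀ : ℝ), 0 < r₀ →
    ∀ D : ℝ → (Fin n → ℝ) → (Fin n → ℝ) → ℂ,
      (∀ t : ℝ, 0 < t → ∀ x ∈ Ω, ∀ y ∈ Ω,
        ‖D t x y‖ ≤
          C₀ * t ^ (-(n : ℝ)) * Real.exp (-(α * dist x y ^ 2 / t ^ 2))) →
    ∀ a : (Fin n → ℝ) → ℝ → ℂ,
      Measurable (fun q : (Fin n → ℝ) × ℝ => a q.1 q.2) →
      (Function.support (fun q : (Fin n → ℝ) × ℝ => a q.1 q.2) ⊆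
        (Metric.closedBall x₀ (r₀ / 2) ∩ Ω) ×ˢ Set.Ioo 0 r₀) →
      ((∫⁻ t in Set.Ioo (0:ℝ) r₀, ∫⁻ y in Metric.closedBall x₀ (r₀ / 2) ∩ Ω,
          (‖a y t‖₊ : ℝ≥0∞) ^ 2 / ENNReal.ofReal t) ^ (1/2 : ℝ)) < ⊤ →
    ∀ x ∈ Ω, 2 * r₀ ≤ dist x x₀ →
      (∫⁻ t in Set.Ioo (0:ℝ) r₀, ∫⁻ y in Metric.closedBall x₀ (r₀ / 2) ∩ Ω,
          ENNReal.ofReal (‖D t x y‖ * ‖a y t‖ / t)) ≤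
        ENNReal.ofReal (C * dist x x₀ ^ (-((n : ℝ) + 1)) * r₀) *
          (volume (Metric.closedBall x₀ (r₀ / 2) ∩ Ω)) ^ (1/2 : ℝ) *
          (∫⁻ t in Set.Ioo (0:ℝ) r₀, ∫⁻ y in Metric.closedBall x₀ (r₀ / 2) ∩ Ω,
            (‖a y t‖₊ : ℝ≥0∞) ^ 2 / ENNReal.ofReal t) ^ (1/2 : ℝ) := by
  refine ⟨C₀ * (n + 1)! * (2 / α) ^ (n + 1), by positivity, ?_⟩
  intro Ω hΩ x₀ r₀ hr₀ D hD a ha _ _ x hx hdist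
  set Q := closedBall x₀ (r₀ / 2) ∩ Ω
  set c := C₀ * (n + 1)! * (2 / α) ^ (n + 1) * dist x x₀ ^ (-((n : ℝ) + 1)) * r₀⁻¹
  have hc : 0 ≤ c := by positivity
  have hpt : ∀ t ∈ Ioo 0 r₀, ∀ y ∈ Q, ENNReal.ofReal (‖D t x y‖ * ‖a y t‖ / t) ≤
      ENNReal.ofReal c * (ENNReal.ofReal t * ‖a y t‖₊) := by
    rintro t ⟨ht, htr⟩ y ⟨hy, hyΩ⟩
    have hfar : dist x x₀ / 2 ≤ dist x y := by
      linarith [dist_triangle x y x₀, mem_closedBall.1 hy]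
    have hker : ‖D t x y‖ ≤ c * t ^ 2 :=
      (hD t ht x hx y hyΩ).trans (gaussian_kernel_bound_le hC₀.le hα ht htr.le hdist hfar)
    rw [← enorm_eq_nnnorm, ← ofReal_norm, ← ENNReal.ofReal_mul ht.le, ← ENNReal.ofReal_mul hc]
    refine ENNReal.ofReal_le_ofReal ?_
    calc ‖D t x y‖ * ‖a y t‖ / t ≤ c * t ^ 2 * ‖a y t‖ / t := by gcongr
      _ = c * (t * ‖a y t‖) := by field_simp
  calc _ ≤ ∫⁻ t in Ioo 0 r₀, ∫⁻ y in Q, ENNReal.ofReal c * (ENNReal.ofReal t * ‖a y t‖₊) :=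
        setLIntegral_mono' measurableSet_Ioo fun t ht =>
          setLIntegral_mono' (measurableSet_closedBall.inter hΩ) (hpt t ht)
    _ = ENNReal.ofReal c * ∫⁻ t in Ioo 0 r₀, ∫⁻ y in Q, ENNReal.ofReal t * ‖a y t‖₊ := by
        simp only [lintegral_const_mul' _ _ ofReal_ne_top]
    _ ≤ ENNReal.ofReal c * (ENNReal.ofReal r₀ ^ 2 * volume Q ^ (1 / 2 : ℝ) *
          (∫⁻ t in Ioo 0 r₀, ∫⁻ y in Q, (‖a y t‖₊ : ℝ≥0∞) ^ 2 / ENNReal.ofReal t) ^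
            (1 / 2 : ℝ)) := by
        gcongr
        simpa only [Measure.restrict_apply_univ] using
          setLIntegral_Ioo_lintegral_ofReal_mul_le (volume.restrict Q)
            (g := fun y t => ‖a y t‖₊) ha.nnnorm.coe_nnreal_ennreal r₀
    _ = _ := by
        rw [← ofReal_pow hr₀.le, ← mul_assoc, ← mul_assoc, ← ofReal_mul hc]
        congr 3
        simp only [c]
        field_simp

/-- decay of the pairing of a Gaussian kernel family `(D_t)` against a function
`a` supported in `(Q₀∩Ω)×(0,r₀)`: for `x ∈ Ω` with `‖x−x₀‖_∞ ≥ 2r₀`,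
`∫₀^{r₀}∫_{Q₀∩Ω} |D_t(x,y)||a(y,t)| dy dt/t ≤ C ‖x−x₀‖_∞^{−(n+1)} r₀ |Q₀∩Ω|^{1/2} ‖a‖`,
where `‖a‖ = (∫₀^{r₀}∫_{Q₀∩Ω}|a|² dy dt/t)^{1/2}` and `Q₀ = closedBall x₀ (r₀/2)` is the
cube `Q(x₀,r₀)` for the sup-norm on `ℝⁿ = Fin n → ℝ`. `C` depends only on `n`, `C₀`, `α`. -/
theorem stmt17 (n : ℕ) (hn : 1 ≤ n) (C₀ α : ℝ) (hC₀ : 0 < C₀) (hα : 0 < α) :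
    ∃ C : ℝ, 0 < C ∧
    ∀ (Ω : Set (Fin n → ℝ)), MeasurableSet Ω →
    ∀ (x₀ : Fin n → ℝ) (r₀ : ℝ), 0 < r₀ →
    ∀ D : ℝ → (Fin n → ℝ) → (Fin n → ℝ) → ℂ,
      (∀ t : ℝ, 0 < t → ∀ x ∈ Ω, ∀ y ∈ Ω,
        ‖D t x y‖ ≤
          C₀ * t ^ (-(n : ℝ)) * Real.exp (-(α * dist x y ^ 2 / t ^ 2))) →
    ∀ a : (Fin n → ℝ) → ℝ → ℂ,
      Measurable (fun q : (Fin n → ℝ) × ℝ => a q.1 q.2) →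
      (Function.support (fun q : (Fin n → ℝ) × ℝ => a q.1 q.2) ⊆
        (Metric.closedBall x₀ (r₀ / 2) ∩ Ω) ×ˢ Set.Ioo 0 r₀) →
      ((∫⁻ t in Set.Ioo (0:ℝ) r₀, ∫⁻ y in Metric.closedBall x₀ (r₀ / 2) ∩ Ω,
          (‖a y t‖₊ : ℝ≥0∞) ^ 2 / ENNReal.ofReal t) ^ (1/2 : ℝ)) < ⊤ →
    ∀ x ∈ Ω, 2 * r₀ ≤ dist x x₀ →
      (∫⁻ t in Set.Ioo (0:ℝ) r₀, ∫⁻ y in Metric.closedBall x₀ (r₀ / 2) ∩ Ω,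
          ENNReal.ofReal (‖D t x y‖ * ‖a y t‖ / t)) ≤
        ENNReal.ofReal (C * dist x x₀ ^ (-((n : ℝ) + 1)) * r₀) *
          (volume (Metric.closedBall x₀ (r₀ / 2) ∩ Ω)) ^ (1/2 : ℝ) *
          (∫⁻ t in Set.Ioo (0:ℝ) r₀, ∫⁻ y in Metric.closedBall x₀ (r₀ / 2) ∩ Ω,
            (‖a y t‖₊ : ℝ≥0∞) ^ 2 / ENNReal.ofReal t) ^ (1/2 : ℝ) :=
  stmt17_general n C₀ α hC₀ hα
end
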